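/- The following hold: (1) if R is not a Gorenstein ring then K : m ⊆ K², and if moreover R is not an AGL ring then K : m ⊊ K²; (2) if ℓ_R(K²/K) = 2 then mK² + K = K : m; (3) if R is not a Gorenstein ring then μ_R(S/K) = r(R/𝔠), so R/𝔠 is a Gorenstein ring if and only if μ_R(S/K) = 1. -/

import Mathlib

open IsLocalRing Polynomial

set_option maxHeartbeats 1000000
set_option synthInstance.maxHeartbeats 400000

noncomputable section

/-- The (ℕ-valued) length `ℓ_R(M)` of an `R`-module `M`, defined as the Krull dimension of
its lattice of submodules (with junk value `0` if the length is infinite). -/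
noncomputable def flen (R M : Type*) [Ring R] [AddCommGroup M] [Module R M] : ℕ :=
  ((Order.krullDim (Submodule R M)).unbotD 0).toNat

/-- The quotient module `Y/X` for submodules `X ⊆ Y` of a module. -/
noncomputable abbrev quotMod {R M : Type*} [CommRing R] [AddCommGroup M] [Module R M]
    (Y X : Submodule R M) :=
  ↥Y ⧸ X.comap Y.subtype

/-- `colen Y X = ℓ_R(Y/X)`. -/
noncomputable def colen {R M : Type*} [CommRing R] [AddCommGroup M] [Module R M]
    (Y X : Submodule R M) : ℕ :=
  flen R (quotMod Y X)

/-- The fractional ideal `K = I/a = {x/a : x ∈ I}` inside the total quotient ring of `R`. -/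
noncomputable def Kfrac (R : Type*) [CommRing R] (I : Ideal R) (a : R) :
    Submodule R (FractionRing R) :=
  Submodule.span R {z : FractionRing R |
    ∃ x ∈ I, z * algebraMap R (FractionRing R) a = algebraMap R (FractionRing R) x}

/-- The ring `S = R[K]`. -/
noncomputable def Sring (R : Type*) [CommRing R] (I : Ideal R) (a : R) :
    Subalgebra R (FractionRing R) :=
  Algebra.adjoin R (Kfrac R I a : Set (FractionRing R))

/-- `S = R[K]` as an `R`-submodule of the total quotient ring. -/
noncomputable def Smod (R : Type*) [CommRing R] (I : Ideal R) (a : R) :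
    Submodule R (FractionRing R) :=
  Subalgebra.toSubmodule (Sring R I a)

/-- The conductor `𝔠 = R : S`, as a submodule of the total quotient ring. -/
noncomputable def condS (R : Type*) [CommRing R] (I : Ideal R) (a : R) :
    Submodule R (FractionRing R) :=
  (1 : Submodule R (FractionRing R)) / Smod R I a

/-- The conductor `𝔠 = R : S`, as an ideal of `R`. -/
noncomputable def condIdeal (R : Type*) [CommRing R] (I : Ideal R) (a : R) : Ideal R :=
  (condS R I a).comap (Algebra.linearMap R (FractionRing R))

/-- The image of the maximal ideal `m` in the total quotient ring. -/
noncomputable def mSub (R : Type*) [CommRing R] [IsLocalRing R] :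
    Submodule R (FractionRing R) :=
  Submodule.map (Algebra.linearMap R (FractionRing R)) (maximalIdeal R)

/-- A fractional ideal `K` is a canonical module of `R` (the Herzog–Kunz duality
characterization): `K : (K : J) = J` for every finitely generated regular fractional ideal. -/
def IsCanonicalSub (R : Type*) [CommRing R] (K : Submodule R (FractionRing R)) : Prop :=
  ∀ J : Submodule R (FractionRing R), J.FG → (∃ z ∈ J, IsUnit z) → K / (K / J) = J

/-- The setting: `I ≠ R` is a canonical ideal of `R` (i.e. `I ≅ K_R`, expressed via the
Herzog–Kunz duality property of `K = I/a`), containing the parameter ideal `Q = (a)`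
(`a` a non-zerodivisor) as a reduction. -/
structure CanSetting (R : Type*) [CommRing R] (I : Ideal R) (a : R) : Prop where
  ne_top : I ≠ ⊤
  mem : a ∈ I
  nzd : a ∈ nonZeroDivisors R
  red : ∃ n : ℕ, I ^ (n + 1) = Ideal.span {a} * I ^ n
  canonical : IsCanonicalSub R (Kfrac R I a)

/-- `μ_R(M)`: the minimal number of generators `ℓ_R(M/mM)`. -/
noncomputable def muR (R : Type*) [CommRing R] [IsLocalRing R]
    (M : Type*) [AddCommGroup M] [Module R M] : ℕ :=
  flen R (M ⧸ (maximalIdeal R • ⊤ : Submodule R M))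

/-- The Sally module `S_Q(I)` of `I` with respect to `Q = (a)` has rank `r`, i.e. the
eventually constant value of `ℓ_R(I^{n+1}/Q^n I) = ℓ_R([S_Q(I)]_n)` equals `r`. -/
def SallyRankIs (R : Type*) [CommRing R] (I : Ideal R) (a : R) (r : ℕ) : Prop :=
  ∃ N : ℕ, ∀ n ≥ N, colen (I ^ (n + 1)) (Ideal.span {a} ^ n * I) = r

/-- `e0` and `e1` are the Hilbert coefficients of the `m`-primary ideal `I`:
`ℓ_R(R/I^{n+1}) = e0·(n+1) - e1` for all large `n`. -/
def IsHilbCoeffs (R : Type*) [CommRing R] (I : Ideal R) (e0 e1 : ℤ) : Prop :=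
  ∃ N : ℕ, ∀ n ≥ N, (flen R (R ⧸ I ^ (n + 1)) : ℤ) = e0 * (n + 1) - e1

/-- The multiplicity `e(A) = e_m^0(A)` of a one-dimensional local ring equals `e`. -/
def RingMultIs (A : Type*) [CommRing A] [IsLocalRing A] (e : ℕ) : Prop :=
  ∃ c : ℤ, ∃ N : ℕ, ∀ n ≥ N,
    (flen A (A ⧸ maximalIdeal A ^ (n + 1)) : ℤ) = (e : ℤ) * (n + 1) - c

/-- `R` is an almost Gorenstein local ring (for the fixed canonical setting): there is an
exact sequence `0 → R → K_R → C → 0` with `mC = 0`; equivalently `m·K ⊆ R`. -/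
def IsAGLSetting (R : Type*) [CommRing R] [IsLocalRing R] (I : Ideal R) (a : R) : Prop :=
  maximalIdeal R • Kfrac R I a ≤ 1

/-- A one-dimensional Cohen-Macaulay local ring is almost Gorenstein. -/
def IsAGLRing (A : Type*) [CommRing A] [IsLocalRing A] : Prop :=
  ∃ (I : Ideal A) (a : A), CanSetting A I a ∧ maximalIdeal A • Kfrac A I a ≤ 1

/-- A one-dimensional local ring is Gorenstein: a fractional canonical ideal equals `R`. -/
def IsGorLoc (A : Type*) [CommRing A] [IsLocalRing A] : Prop :=
  ∃ (I : Ideal A) (a : A), CanSetting A I a ∧ Kfrac A I a = 1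

/-- A one-dimensional ring is Gorenstein: all localizations at maximal ideals are. -/
def IsGorRing (A : Type*) [CommRing A] : Prop :=
  ∀ P : Ideal A, ∀ hP : P.IsMaximal, by
    haveI := hP.isPrime
    exact IsGorLoc (Localization.AtPrime P)

/-- `R` is a `2`-almost Gorenstein local ring: `K² = K³` and `ℓ_R(K²/K) = 2`. -/
def IsTwoAGLK (R : Type*) [CommRing R] (I : Ideal R) (a : R) : Prop :=
  Kfrac R I a ^ 2 = Kfrac R I a ^ 3 ∧ colen (Kfrac R I a ^ 2) (Kfrac R I a) = 2

/-- A ring is a `2`-almost Gorenstein local ring: the Sally module of a canonical ideal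
with respect to a principal reduction has rank `2`. -/
def IsTwoAGLRing (A : Type*) [CommRing A] : Prop :=
  ∃ (I : Ideal A) (a : A), CanSetting A I a ∧ SallyRankIs A I a 2

end

/-!
The canonical fractional ideal `K` is characterised by the duality `J ↦ K / J`, an
inclusion-reversing involution on finitely generated fractional ideals containing a unit. Lengths
of subquotients are Krull dimensions of intervals of submodules, so the duality gives
`ℓ(Y / X) = ℓ((K / X) / (K / Y))`.

Since `K / K = R`, the ideal `K / K²` lies in `R`. It does not contain `1` unless `K = R`, so it
lies in `m`, and then `K / m ⊆ K / (K / K²) = K²`. If equality holds, `K / K² = m`, that is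
`mK ⊆ R`. Dually to `m ⋖ R`, the ideal `K / m` covers `K`. When `ℓ(K² / K) = 2`, Nakayama gives
`m²K² ⊆ K`, while `mK² ⊄ K`. Hence `K ⊊ mK² + K ⊆ K / m`, and the cover forces equality. Finally
`μ(S / K) = ℓ(S / (mS + K))`, which the duality turns into `ℓ((K / (mS + K)) / (K / S))`, and
`K / S = R / S = 𝔠`, `K / (mS + K) = 𝔠 : m`.
-/

open Order

namespace Set.Icc

variable {α : Type*} [Preorder α] {a b : α}

def subtypeIccOrderIso (x y : Set.Icc a b) : Set.Icc x y ≃o Set.Icc (x : α) y where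
  toFun z := ⟨z.1.1, z.2⟩
  invFun w := ⟨⟨w.1, x.2.1.trans w.2.1, w.2.2.trans y.2.2⟩, w.2⟩
  left_inv _ := rfl
  right_inv _ := rfl
  map_rel_iff' := Iff.rfl

end Set.Icc

theorem krullDim_Icc_le_one_of_covBy {α : Type*} [PartialOrder α] {x y z : α} (hxz : x ⋖ z)
    (hyz : y ≤ z) : krullDim (Set.Icc x y) ≤ 1 := by
  refine krullDim_le_one_iff.2 fun w => ?_
  rcases hxz.eq_or_eq w.2.1 (w.2.2.trans hyz) with h | h
  · exact .inl fun v _ => Subtype.coe_le_coe.1 (h.le.trans v.2.1)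
  · exact .inr fun v _ => Subtype.coe_le_coe.1 ((v.2.2.trans hyz).trans h.ge)

namespace Submodule

variable {R M : Type*} [CommRing R] [AddCommGroup M] [Module R M] {X Y : Submodule R M}

def quotModOrderIso (hXY : X ≤ Y) : Submodule R (quotMod Y X) ≃o Set.Icc X Y where
  toFun N := ⟨(N.comap (X.comap Y.subtype).mkQ).map Y.subtype, by
    refine ⟨fun x hx => ⟨⟨x, hXY hx⟩, ?_, rfl⟩, map_subtype_le Y _⟩
    simp [(Submodule.Quotient.mk_eq_zero _).2 (show (⟨x, hXY hx⟩ : Y) ∈ X.comap Y.subtype from hx)]⟩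
  invFun W := (W.1.comap Y.subtype).map (X.comap Y.subtype).mkQ
  left_inv N := by
    simp only [comap_map_eq_of_injective Y.injective_subtype,
      map_comap_eq_of_surjective (mkQ_surjective _)]
  right_inv W := by
    ext1
    simp only [comap_map_mkQ, map_sup, map_comap_subtype, inf_eq_right.2 W.2.2,
      inf_eq_right.2 hXY, sup_eq_right.2 W.2.1]
  map_rel_iff' {N N'} := by
    refine ⟨fun h => ?_, fun h => map_mono (comap_mono h)⟩
    replace h : (N.comap _).map Y.subtype ≤ (N'.comap _).map Y.subtype := h
    have := map_mono (f := (X.comap Y.subtype).mkQ) (comap_mono (f := Y.subtype) h)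
    simpa only [comap_map_eq_of_injective Y.injective_subtype,
      map_comap_eq_of_surjective (mkQ_surjective _)] using this

variable {N : Type*} [AddCommGroup N] [Module R N]

def mapIccOrderIso {f : M →ₗ[R] N} (hf : Function.Injective f) (X Y : Submodule R M) :
    Set.Icc X Y ≃o Set.Icc (X.map f) (Y.map f) where
  toFun W := ⟨W.1.map f, map_mono W.2.1, map_mono W.2.2⟩
  invFun W := ⟨W.1.comap f, (comap_map_eq_of_injective hf X).ge.trans (comap_mono W.2.1),
    (comap_mono W.2.2).trans (comap_map_eq_of_injective hf Y).le⟩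
  left_inv W := Subtype.ext (comap_map_eq_of_injective hf W.1)
  right_inv W := Subtype.ext <| by
    change map f (comap f W.1) = W.1
    rw [map_comap_eq, inf_eq_right.2 (W.2.2.trans LinearMap.map_le_range)]
  map_rel_iff' := map_le_map_iff_of_injective hf _ _

end Submodule

section Colength

variable {R M : Type*} [CommRing R] [AddCommGroup M] [Module R M] {X Y : Submodule R M}

open Submodule

theorem colen_eq_toNat_krullDim (hXY : X ≤ Y) :
    colen Y X = ((krullDim (Set.Icc X Y)).unbotD 0).toNat := by
  rw [colen, flen, krullDim_eq_of_orderIso (quotModOrderIso hXY)]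

theorem colen_eq_colen_of_krullDim_eq {M' : Type*} [AddCommGroup M'] [Module R M']
    {X' Y' : Submodule R M'} (hXY : X ≤ Y) (hXY' : X' ≤ Y')
    (h : krullDim (Set.Icc X Y) = krullDim (Set.Icc X' Y')) : colen Y X = colen Y' X' := by
  rw [colen_eq_toNat_krullDim hXY, colen_eq_toNat_krullDim hXY', h]

-- `colen` is `0` both for `X = Y` and for infinite length, whence `n ≠ 0`.
theorem krullDim_Icc_eq_of_colen_eq (hXY : X ≤ Y) {n : ℕ} (h : colen Y X = n) (hn : n ≠ 0) :
    krullDim (Set.Icc X Y) = n := by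
  rw [colen_eq_toNat_krullDim hXY] at h
  generalize krullDim (Set.Icc X Y) = d at h ⊢
  induction d using WithBot.recBotCoe with
  | bot => exact absurd h.symm hn
  | coe d =>
    induction d using ENat.recTopCoe with
    | top => exact absurd h.symm hn
    | coe d => simp_all

theorem colen_map_of_injective {N : Type*} [AddCommGroup N] [Module R N] {f : M →ₗ[R] N}
    (hf : Function.Injective f) (hXY : X ≤ Y) : colen (Y.map f) (X.map f) = colen Y X :=
  (colen_eq_colen_of_krullDim_eq hXY (map_mono hXY)
    (krullDim_eq_of_orderIso (mapIccOrderIso hf X Y))).symm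

theorem muR_quotMod_eq_colen [IsLocalRing R] (hXY : X ≤ Y) :
    muR R (quotMod Y X) = colen Y (IsLocalRing.maximalIdeal R • Y ⊔ X) := by
  set m := IsLocalRing.maximalIdeal R
  set e := quotModOrderIso hXY
  have hbot : (e (m • ⊤) : Submodule R M) = m • Y ⊔ X := by
    have : (m • ⊤ : Submodule R (quotMod Y X)) = (m • ⊤ : Submodule R Y).map (mkQ _) := by
      rw [map_smul'', Submodule.map_top, range_mkQ]
    change map Y.subtype (comap (mkQ _) _) = _
    rw [this, comap_map_mkQ, Submodule.map_sup, map_smul'', Submodule.map_top, range_subtype,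
      map_comap_subtype, inf_eq_right.2 hXY, sup_comm]
  have htop : (e ⊤ : Submodule R M) = Y := by
    change map Y.subtype (comap (mkQ _) ⊤) = Y
    rw [comap_top, Submodule.map_top, range_subtype]
  rw [muR, flen, krullDim_eq_of_orderIso (comapMkQRelIso _),
    colen_eq_toNat_krullDim (sup_le smul_le_right hXY),
    krullDim_eq_of_orderIso ((OrderIso.setCongr _ _ Set.Icc_top.symm).trans
      ((e.Icc _ _).trans (Set.Icc.subtypeIccOrderIso _ _))), hbot, htop]

end Colength

section Nakayama

variable {R M : Type*} [CommRing R] [IsLocalRing R] [IsNoetherianRing R]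
  [AddCommGroup M] [Module R M]

open Submodule IsLocalRing

theorem maximalIdeal_smul_smul_le_of_krullDim_Icc_le_two {X N : Submodule R M} (hXN : X ≤ N)
    (hN : N.FG) (hdim : krullDim (Set.Icc X N) ≤ 2) :
    maximalIdeal R • maximalIdeal R • N ≤ X := by
  set m := maximalIdeal R
  have hjac : m ≤ (⊥ : Ideal R).jacobson := (jacobson_eq_maximalIdeal ⊥ bot_ne_top).ge
  by_contra h
  have hlt₁ : X < X ⊔ m • m • N := left_lt_sup.2 h
  have hlt₂ : X ⊔ m • m • N < X ⊔ m • N := by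
    refine lt_of_le_of_ne (sup_le_sup_left (smul_mono_right _ smul_le_right) _) fun heq => h ?_
    have : m • N ≤ X :=
      le_of_le_smul_of_le_jacobson_bot (hN.of_le smul_le_right) hjac (le_sup_right.trans heq.ge)
    exact smul_le_right.trans this
  have hlt₃ : X ⊔ m • N < N := by
    refine lt_of_le_of_ne (sup_le hXN smul_le_right) fun heq => h ?_
    exact smul_le_right.trans (smul_le_right.trans
      (le_of_le_smul_of_le_jacobson_bot hN hjac heq.ge))
  have hmid₁ : X ⊔ m • m • N ≤ N := sup_le hXN (smul_le_right.trans smul_le_right)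
  have hmid₂ : X ⊔ m • N ≤ N := sup_le hXN smul_le_right
  have := (LTSeries.length_le_krullDim <| RelSeries.fromListIsChain
    [(⟨X, le_rfl, hXN⟩ : Set.Icc X N), ⟨_, le_sup_left, hmid₁⟩, ⟨_, le_sup_left, hmid₂⟩,
      ⟨N, hXN, le_rfl⟩] (by simp)
    (by simpa [List.isChain_cons_cons] using ⟨hlt₁, hlt₂, hlt₃⟩)).trans hdim
  norm_num [RelSeries.fromListIsChain] at this

end Nakayama

namespace Submodule

variable {R A : Type*} [CommSemiring R] [CommSemiring A] [Algebra R A]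

theorem div_le_div_left {B C : Submodule R A} (h : B ≤ C) (D : Submodule R A) : D / C ≤ D / B :=
  fun _ hx y hy => hx y (h hy)

theorem div_one (C : Submodule R A) : C / 1 = C :=
  le_antisymm (fun x hx => by simpa using hx 1 (one_le.1 le_rfl))
    (le_div_iff_mul_le.2 (mul_one C).le)

theorem fg_one : (1 : Submodule R A).FG :=
  one_eq_span (R := R) (A := A) ▸ fg_span_singleton 1

theorem div_sup (C D E : Submodule R A) : C / (D ⊔ E) = C / D ⊓ C / E :=
  le_antisymm (le_inf (div_le_div_left le_sup_left C) (div_le_div_left le_sup_right C)) <| by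
    rw [le_div_iff_mul_le, mul_sup]
    exact sup_le (le_div_iff_mul_le.1 inf_le_left) (le_div_iff_mul_le.1 inf_le_right)

theorem div_mul (C D E : Submodule R A) : C / (D * E) = C / D / E :=
  eq_of_forall_le_iff fun W => by simp only [le_div_iff_mul_le, mul_assoc, mul_comm E]

theorem map_comap_linearMap_of_le_one {W : Submodule R A} (hW : W ≤ 1) :
    (W.comap (Algebra.linearMap R A)).map (Algebra.linearMap R A) = W := by
  rw [map_comap_eq, ← one_eq_range, inf_eq_right.2 hW]

theorem map_linearMap_colon (hinj : Function.Injective (algebraMap R A)) (c J : Ideal R) :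
    map (Algebra.linearMap R A) (c.colon J) =
      map (Algebra.linearMap R A) c / map (Algebra.linearMap R A) J ⊓ 1 := by
  ext x
  refine ⟨?_, fun ⟨hx, hx1⟩ => ?_⟩
  · rintro ⟨r, hr, rfl⟩
    refine ⟨?_, mem_one.2 ⟨r, rfl⟩⟩
    rintro _ ⟨p, hp, rfl⟩
    exact ⟨r * p, mem_colon.1 hr p hp, by simp⟩
  · obtain ⟨r, rfl⟩ := mem_one.1 hx1
    refine ⟨r, mem_colon.2 fun p hp => ?_, rfl⟩
    obtain ⟨q, hq, he⟩ := hx _ ⟨p, hp, rfl⟩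
    rwa [smul_eq_mul, ← hinj (he.trans (map_mul _ r p).symm)]

theorem adjoin_le_pow_of_pow_succ_eq {M : Submodule R A} (h1 : (1 : A) ∈ M) {n : ℕ}
    (h : M ^ (n + 1) = M ^ n) :
    Subalgebra.toSubmodule (Algebra.adjoin R (M : Set A)) ≤ M ^ n := by
  have hstab : ∀ j, M ^ (n + j) = M ^ n := fun j => by
    induction j with
    | zero => rfl
    | succ j ih => rw [← add_assoc, pow_succ, ih, ← pow_succ, h]
  have hM1 : 1 ≤ M := one_le.2 h1
  let S := (M ^ n).toSubalgebra (one_le.1 (one_le_pow_of_one_le' hM1 n)) fun {x y} hx hy => by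
    have := mul_mem_mul hx hy
    rwa [← pow_add, hstab] at this
  exact Algebra.adjoin_le (S := S) ((le_self_pow hM1 n.succ_ne_zero).trans h.le)

theorem isUnit_span_singleton {z : A} (hz : IsUnit z) : IsUnit (span R {z}) := by
  obtain ⟨u, rfl⟩ := hz
  refine IsUnit.of_mul_eq_one (span R {↑u⁻¹}) ?_
  rw [span_mul_span, Set.singleton_mul_singleton, u.mul_inv, ← one_eq_span]

end Submodule

section Duality

variable {R : Type*} [CommRing R] {K X Y : Submodule R (FractionRing R)}

open Submodule

theorem IsCanonicalSub.div_self (hK : IsCanonicalSub R K) : K / K = 1 := by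
  simpa [Submodule.div_one] using hK 1 fg_one ⟨1, one_le.1 le_rfl, isUnit_one⟩

theorem IsCanonicalSub.div_le_one (hK : IsCanonicalSub R K) (h : K ≤ X) : K / X ≤ 1 :=
  hK.div_self ▸ div_le_div_left h K

theorem fg_div_of_isUnit_mem [IsNoetherianRing R] (hK : K.FG) {z : FractionRing R}
    (hz : IsUnit z) (hzX : z ∈ X) : (K / X).FG := by
  obtain ⟨u, rfl⟩ := hz
  refine (hK.map (LinearMap.mulLeft R ↑u⁻¹)).of_le fun x hx => ⟨x * u, hx _ hzX, ?_⟩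
  simp [mul_left_comm _ x]

theorem exists_isUnit_mem_div (h1 : (1 : FractionRing R) ∈ K) (hY : Y.FG) :
    ∃ s ∈ K / Y, IsUnit s := by
  obtain ⟨b, hb, hbY⟩ := FractionalIdeal.isFractional_of_fg (S := nonZeroDivisors R) hY
  refine ⟨algebraMap R _ b, fun y hy => ?_,
    IsLocalization.map_units _ (⟨b, hb⟩ : nonZeroDivisors R)⟩
  obtain ⟨r, hr⟩ := hbY y hy
  rw [← Algebra.smul_def, ← hr]
  exact one_le.2 h1 (mem_one.2 ⟨r, rfl⟩)

variable [IsNoetherianRing R]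

def IsCanonicalSub.divOrderIso (hK : IsCanonicalSub R K) (hKfg : K.FG)
    (h1 : (1 : FractionRing R) ∈ K) (hXY : X ≤ Y) (hY : Y.FG) (hX : ∃ z ∈ X, IsUnit z) :
    Set.Icc X Y ≃o (Set.Icc (K / Y) (K / X))ᵒᵈ :=
  have hdd : ∀ W ∈ Set.Icc X Y, K / (K / W) = W := fun W hW =>
    hK W (hY.of_le hW.2) (hX.imp fun _ hz => ⟨hW.1 hz.1, hz.2⟩)
  { toFun W := OrderDual.toDual ⟨K / W, div_le_div_left W.2.2 K, div_le_div_left W.2.1 K⟩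
    invFun W := ⟨K / OrderDual.ofDual W,
      (hdd X ⟨le_rfl, hXY⟩).ge.trans (div_le_div_left (OrderDual.ofDual W).2.2 K),
      (div_le_div_left (OrderDual.ofDual W).2.1 K).trans (hdd Y ⟨hXY, le_rfl⟩).le⟩
    left_inv W := Subtype.ext (hdd W W.2)
    right_inv W := by
      obtain ⟨z, hz, hzu⟩ := hX
      obtain ⟨s, hs, hsu⟩ := exists_isUnit_mem_div h1 hY
      exact congrArg OrderDual.toDual <| Subtype.ext <| hK _
        ((fg_div_of_isUnit_mem hKfg hzu hz).of_le (OrderDual.ofDual W).2.2)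
        ⟨s, (OrderDual.ofDual W).2.1 hs, hsu⟩
    map_rel_iff' {W V} := by
      refine ⟨fun h => ?_, fun h => div_le_div_left h K⟩
      have := div_le_div_left (show K / V ≤ K / W from h) K
      rwa [hdd W W.2, hdd V V.2] at this }

theorem IsCanonicalSub.colen_div (hK : IsCanonicalSub R K) (hKfg : K.FG)
    (h1 : (1 : FractionRing R) ∈ K) (hXY : X ≤ Y) (hY : Y.FG) (hX : ∃ z ∈ X, IsUnit z) :
    colen (K / X) (K / Y) = colen Y X :=
  colen_eq_colen_of_krullDim_eq (div_le_div_left hXY K) hXY <| by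
    rw [← krullDim_orderDual,
      ← krullDim_eq_of_orderIso (hK.divOrderIso hKfg h1 hXY hY hX)]

end Duality

section LocalRing

variable {R : Type*} [CommRing R] [IsLocalRing R] {K W : Submodule R (FractionRing R)}

open Submodule IsLocalRing

theorem maximalIdeal_smul_eq_mul (N : Submodule R (FractionRing R)) :
    maximalIdeal R • N = mSub R * N :=
  Algebra.smul_def (maximalIdeal R) N

theorem maximalIdeal_smul_le_iff {N C : Submodule R (FractionRing R)} :
    maximalIdeal R • N ≤ C ↔ N ≤ C / mSub R := by
  rw [maximalIdeal_smul_eq_mul, mul_comm]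
  exact Submodule.le_div_iff_mul_le.symm

theorem one_notMem_mSub : (1 : FractionRing R) ∉ mSub R := by
  rintro ⟨r, hr, h⟩
  rw [Algebra.linearMap_apply, ← map_one (algebraMap R _)] at h
  exact (maximalIdeal.isMaximal R).ne_top
    ((Ideal.eq_top_iff_one _).2 (IsFractionRing.injective R (FractionRing R) h ▸ hr))

theorem le_mSub_of_le_one (hW : W ≤ 1) (h1 : (1 : FractionRing R) ∉ W) : W ≤ mSub R := by
  intro x hx
  obtain ⟨r, rfl⟩ := mem_one.1 (hW hx)
  have hr : r ∈ maximalIdeal R := by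
    by_contra hr
    obtain ⟨u, rfl⟩ := notMem_maximalIdeal.1 hr
    exact h1 (by simpa [Algebra.smul_def, ← map_mul] using W.smul_mem (↑u⁻¹ : R) hx)
  exact ⟨r, hr, rfl⟩

theorem exists_isUnit_mem_mSub (hCM : ∃ x ∈ maximalIdeal R, x ∈ nonZeroDivisors R) :
    ∃ z ∈ mSub R, IsUnit z := by
  obtain ⟨x, hx, hnzd⟩ := hCM
  exact ⟨_, ⟨x, hx, rfl⟩, IsLocalization.map_units _ (⟨x, hnzd⟩ : nonZeroDivisors R)⟩

theorem IsCanonicalSub.div_mSub_le_sq (hK : IsCanonicalSub R K) (hKfg : K.FG)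
    (h1 : (1 : FractionRing R) ∈ K) (hne : K ≠ 1) : K / mSub R ≤ K ^ 2 := by
  have hK2 : K ≤ K ^ 2 := le_self_pow (one_le.2 h1) two_ne_zero
  have hnot : (1 : FractionRing R) ∉ K / K ^ 2 := by
    rw [one_mem_div]
    refine fun hle => hne (le_antisymm ?_ (one_le.2 h1))
    rw [← hK.div_self, Submodule.le_div_iff_mul_le, ← sq]
    exact hle
  calc K / mSub R ≤ K / (K / K ^ 2) :=
        div_le_div_left (le_mSub_of_le_one (hK.div_le_one hK2) hnot) K
    _ = K ^ 2 := hK _ (hKfg.pow 2) ⟨1, hK2 h1, isUnit_one⟩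

theorem IsCanonicalSub.div_mSub_lt_sq (hK : IsCanonicalSub R K) (hKfg : K.FG)
    (h1 : (1 : FractionRing R) ∈ K) (hne : K ≠ 1) (hAGL : ¬ maximalIdeal R • K ≤ 1) :
    K / mSub R < K ^ 2 := by
  refine (hK.div_mSub_le_sq hKfg h1 hne).lt_of_ne fun heq => hAGL ?_
  rw [← hK.div_self, Submodule.le_div_iff_mul_le, maximalIdeal_smul_eq_mul, mul_assoc, ← sq,
    ← maximalIdeal_smul_eq_mul, maximalIdeal_smul_le_iff]
  exact heq.ge

variable [IsNoetherianRing R]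

theorem IsCanonicalSub.covBy_div_mSub (hK : IsCanonicalSub R K) (hKfg : K.FG)
    (h1 : (1 : FractionRing R) ∈ K) (hCM : ∃ x ∈ maximalIdeal R, x ∈ nonZeroDivisors R) :
    K ⋖ K / mSub R := by
  have hm := exists_isUnit_mem_mSub hCM
  have hdd : K / (K / mSub R) = mSub R := hK _ ((IsNoetherian.noetherian (maximalIdeal R)).map _) hm
  have hKm : K ≤ K / mSub R := maximalIdeal_smul_le_iff.1 smul_le_right
  refine ⟨hKm.lt_of_ne fun h => one_notMem_mSub (R := R) ?_, fun N hKN hNm => ?_⟩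
  · rw [← hdd, ← h, hK.div_self]
    exact one_le.1 le_rfl
  obtain ⟨z, hz, hzu⟩ := hm
  have hNN : K / (K / N) = N :=
    hK N ((fg_div_of_isUnit_mem hKfg hzu hz).of_le hNm.le) ⟨1, hKN.le h1, isUnit_one⟩
  by_cases hc : K / N ≤ mSub R
  · exact hNm.not_ge (hNN ▸ div_le_div_left hc K)
  · refine hKN.not_ge (one_mem_div.1 ?_)
    by_contra h
    exact hc (le_mSub_of_le_one (hK.div_le_one hKN.le) h)

theorem IsCanonicalSub.maximalIdeal_smul_sq_sup_eq (hK : IsCanonicalSub R K) (hKfg : K.FG)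
    (h1 : (1 : FractionRing R) ∈ K) (hCM : ∃ x ∈ maximalIdeal R, x ∈ nonZeroDivisors R)
    (h2 : colen (K ^ 2) K = 2) : maximalIdeal R • K ^ 2 ⊔ K = K / mSub R := by
  have hK2 : K ≤ K ^ 2 := le_self_pow (one_le.2 h1) two_ne_zero
  have hdim : krullDim (Set.Icc K (K ^ 2)) = 2 := krullDim_Icc_eq_of_colen_eq hK2 h2 two_ne_zero
  have hcov := hK.covBy_div_mSub hKfg h1 hCM
  have hmK2 : ¬ maximalIdeal R • K ^ 2 ≤ K := fun h => by
    have := krullDim_Icc_le_one_of_covBy hcov (maximalIdeal_smul_le_iff.1 h)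
    rw [hdim] at this
    norm_num at this
  have hm2K2 := maximalIdeal_smul_smul_le_of_krullDim_Icc_le_two hK2 (hKfg.pow 2) hdim.le
  have hle : maximalIdeal R • K ^ 2 ⊔ K ≤ K / mSub R :=
    maximalIdeal_smul_le_iff.1 (by rw [Submodule.smul_sup]; exact sup_le hm2K2 smul_le_right)
  exact (hcov.eq_or_eq le_sup_right hle).resolve_left fun h => hmK2 (le_sup_left.trans h.le)

end LocalRing

section Conductor

variable {R : Type*} [CommRing R] {K T : Submodule R (FractionRing R)}

open Submodule IsLocalRing

theorem IsCanonicalSub.map_comap_one_div (hK : IsCanonicalSub R K)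
    (h1 : (1 : FractionRing R) ∈ K) {S : Subalgebra R (FractionRing R)}
    (hKS : K ≤ Subalgebra.toSubmodule S) :
    Submodule.map (Algebra.linearMap R (FractionRing R))
        ((1 / Subalgebra.toSubmodule S).comap (Algebra.linearMap R (FractionRing R))) =
      K / Subalgebra.toSubmodule S := by
  have hS1 : 1 ≤ Subalgebra.toSubmodule S := Submodule.one_le.2 S.one_mem
  rw [Submodule.map_comap_linearMap_of_le_one
    ((Submodule.div_le_div_left hS1 1).trans (Submodule.div_one 1).le)]
  refine le_antisymm (fun x hx s hs => Submodule.one_le.2 h1 (hx s hs)) fun x hx s hs => ?_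
  rw [← hK.div_self]
  exact fun k hk => mul_assoc x s k ▸ hx _ (S.mul_mem hs (hKS hk))

variable [IsLocalRing R] [IsNoetherianRing R]

theorem IsCanonicalSub.muR_quotMod_eq_colen_colon (hK : IsCanonicalSub R K) (hKfg : K.FG)
    (h1 : (1 : FractionRing R) ∈ K) (hKT : K ≤ T) (hT : T.FG) {c : Ideal R}
    (hc : map (Algebra.linearMap R (FractionRing R)) c = K / T) :
    muR R (quotMod T K) = colen (c.colon (maximalIdeal R)) c := by
  have hinj := IsFractionRing.injective R (FractionRing R)
  have hX : maximalIdeal R • T ⊔ K ≤ T := sup_le smul_le_right hKT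
  have hcolon : map (Algebra.linearMap R (FractionRing R)) (c.colon (maximalIdeal R)) =
      K / (maximalIdeal R • T ⊔ K) := by
    rw [map_linearMap_colon hinj, hc, Submodule.div_sup, hK.div_self, maximalIdeal_smul_eq_mul,
      mul_comm, Submodule.div_mul]
    rfl
  calc muR R (quotMod T K) = colen T (maximalIdeal R • T ⊔ K) := muR_quotMod_eq_colen hKT
    _ = colen (K / (maximalIdeal R • T ⊔ K)) (K / T) :=
      (hK.colen_div hKfg h1 hX hT ⟨1, le_sup_right (a := maximalIdeal R • T) h1, isUnit_one⟩).symm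
    _ = colen (map (Algebra.linearMap R (FractionRing R)) (c.colon (maximalIdeal R)))
        (map (Algebra.linearMap R (FractionRing R)) c) := by rw [hcolon, hc]
    _ = colen (c.colon (maximalIdeal R)) c := colen_map_of_injective hinj Ideal.le_colon

end Conductor

section CanonicalIdeal

variable {R : Type*} [CommRing R] {I : Ideal R} {a : R}

open Submodule

theorem CanSetting.one_mem_Kfrac (h : CanSetting R I a) : (1 : FractionRing R) ∈ Kfrac R I a :=
  subset_span ⟨a, h.mem, one_mul _⟩

theorem isUnit_algebraMap_of_mem_nonZeroDivisors (ha : a ∈ nonZeroDivisors R) :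
    IsUnit (algebraMap R (FractionRing R) a) :=
  IsLocalization.map_units (FractionRing R) (⟨a, ha⟩ : nonZeroDivisors R)

theorem span_algebraMap_mul_Kfrac (ha : a ∈ nonZeroDivisors R) :
    span R {algebraMap R (FractionRing R) a} * Kfrac R I a =
      algebraMap (Ideal R) (Submodule R (FractionRing R)) I := by
  refine le_antisymm ?_ ?_
  · rw [Kfrac, span_mul_span, span_le]
    rintro _ ⟨_, rfl, z, ⟨x, hx, hz⟩, rfl⟩
    exact ⟨x, hx, by rw [Algebra.linearMap_apply, ← hz, mul_comm]⟩
  · rintro _ ⟨x, hx, rfl⟩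
    obtain ⟨u, hu⟩ := isUnit_algebraMap_of_mem_nonZeroDivisors ha
    have hmem : ↑u⁻¹ * algebraMap R (FractionRing R) x ∈ Kfrac R I a :=
      subset_span ⟨x, hx, by rw [← hu, mul_right_comm, u.inv_mul, one_mul]⟩
    simpa [← hu, ← mul_assoc] using mul_mem_mul (mem_span_singleton_self (u : FractionRing R)) hmem

theorem Kfrac_fg [IsNoetherianRing R] (ha : a ∈ nonZeroDivisors R) : (Kfrac R I a).FG := by
  obtain ⟨v, hv⟩ := isUnit_span_singleton (R := R) (isUnit_algebraMap_of_mem_nonZeroDivisors ha)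
  have hK : Kfrac R I a = ↑v⁻¹ * algebraMap (Ideal R) (Submodule R (FractionRing R)) I := by
    rw [← span_algebraMap_mul_Kfrac ha, ← hv, ← mul_assoc, v.inv_mul, one_mul]
  rw [hK]
  exact (fg_unit v⁻¹).mul ((IsNoetherian.noetherian I).map _)

theorem Kfrac_pow_succ (ha : a ∈ nonZeroDivisors R) {n : ℕ}
    (h : I ^ (n + 1) = Ideal.span {a} * I ^ n) : Kfrac R I a ^ (n + 1) = Kfrac R I a ^ n := by
  have hspan : algebraMap (Ideal R) (Submodule R (FractionRing R)) (Ideal.span {a}) =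
      span R {algebraMap R (FractionRing R) a} := by
    change Submodule.map _ (span R {a}) = _
    rw [map_span, Set.image_singleton]
    rfl
  have hmap := congrArg (algebraMap (Ideal R) (Submodule R (FractionRing R))) h
  rw [map_pow, map_mul, map_pow, hspan, ← span_algebraMap_mul_Kfrac ha] at hmap
  have hunit := isUnit_span_singleton (R := R) (isUnit_algebraMap_of_mem_nonZeroDivisors ha)
  refine (hunit.pow (n + 1)).mul_left_cancel ?_
  rw [← mul_pow, hmap, mul_pow, pow_succ', mul_assoc]

theorem CanSetting.Smod_fg [IsNoetherianRing R] (h : CanSetting R I a) : (Smod R I a).FG := by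
  obtain ⟨n, hn⟩ := h.red
  exact ((Kfrac_fg h.nzd).pow n).of_le
    (adjoin_le_pow_of_pow_succ_eq h.one_mem_Kfrac (Kfrac_pow_succ h.nzd hn))

end CanonicalIdeal

theorem corollary_two_five_general (R : Type*) [CommRing R] [IsLocalRing R] [IsNoetherianRing R]
    (hCM : ∃ x ∈ maximalIdeal R, x ∈ nonZeroDivisors R)
    (I : Ideal R) (a : R) (hset : CanSetting R I a) :
    (Kfrac R I a ≠ 1 → Kfrac R I a / mSub R ≤ Kfrac R I a ^ 2) ∧
    (Kfrac R I a ≠ 1 → ¬ IsAGLSetting R I a →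
      Kfrac R I a / mSub R < Kfrac R I a ^ 2) ∧
    (colen (Kfrac R I a ^ 2) (Kfrac R I a) = 2 →
      maximalIdeal R • (Kfrac R I a ^ 2) ⊔ Kfrac R I a = Kfrac R I a / mSub R) ∧
    (Kfrac R I a ≠ 1 →
      muR R (quotMod (Smod R I a) (Kfrac R I a)) =
        colen (Submodule.colon (condIdeal R I a) (maximalIdeal R)) (condIdeal R I a) ∧
      (colen (Submodule.colon (condIdeal R I a) (maximalIdeal R)) (condIdeal R I a) = 1 ↔
        muR R (quotMod (Smod R I a) (Kfrac R I a)) = 1)) := by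
  have hK := hset.canonical
  have hKfg := Kfrac_fg (I := I) hset.nzd
  have h1 := hset.one_mem_Kfrac
  have hKS : Kfrac R I a ≤ Smod R I a := fun _ hx => Algebra.subset_adjoin hx
  have hmu : muR R (quotMod (Smod R I a) (Kfrac R I a)) =
      colen (Submodule.colon (condIdeal R I a) (maximalIdeal R)) (condIdeal R I a) :=
    hK.muR_quotMod_eq_colen_colon hKfg h1 hKS hset.Smod_fg (hK.map_comap_one_div h1 hKS)
  exact ⟨hK.div_mSub_le_sq hKfg h1, hK.div_mSub_lt_sq hKfg h1,
    hK.maximalIdeal_smul_sq_sup_eq hKfg h1 hCM, fun _ => ⟨hmu, by rw [hmu]⟩⟩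

/-- **Corollary 2.5.** (1) If `R` is not Gorenstein then `K : m ⊆ K²`, and if moreover `R` is
not an AGL ring then `K : m ⊊ K²`; (2) if `ℓ_R(K²/K) = 2` then `mK² + K = K : m`;
(3) if `R` is not Gorenstein then `μ_R(S/K) = r(R/𝔠)`, hence `R/𝔠` is Gorenstein iff
`μ_R(S/K) = 1`. -/
theorem corollary_two_five (R : Type*) [CommRing R] [IsLocalRing R] [IsNoetherianRing R]
    (hdim : ringKrullDim R = 1)
    (hCM : ∃ x ∈ maximalIdeal R, x ∈ nonZeroDivisors R)
    (I : Ideal R) (a : R) (hset : CanSetting R I a) :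
    (Kfrac R I a ≠ 1 → Kfrac R I a / mSub R ≤ Kfrac R I a ^ 2) ∧
    (Kfrac R I a ≠ 1 → ¬ IsAGLSetting R I a →
      Kfrac R I a / mSub R < Kfrac R I a ^ 2) ∧
    (colen (Kfrac R I a ^ 2) (Kfrac R I a) = 2 →
      maximalIdeal R • (Kfrac R I a ^ 2) ⊔ Kfrac R I a = Kfrac R I a / mSub R) ∧
    (Kfrac R I a ≠ 1 →
      muR R (quotMod (Smod R I a) (Kfrac R I a)) =
        colen (Submodule.colon (condIdeal R I a) (maximalIdeal R)) (condIdeal R I a) ∧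
      (colen (Submodule.colon (condIdeal R I a) (maximalIdeal R)) (condIdeal R I a) = 1 ↔
        muR R (quotMod (Smod R I a) (Kfrac R I a)) = 1)) :=
  corollary_two_five_general R hCM I a hset
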